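/- (The Kesava Menon norm preserves degree; its core has squared roots.) Let R be a commutative ring, k ≥ 1, and λ_1, …, λ_k ∈ R. Let f : ℕ → R be the sequence whose generating function is ∏_{i=1}^{k} 1/(1 − λ_i y), i.e. (∏_{i=1}^{k} (1 − λ_i y)) · (∑_{n≥0} f_n y^n) = 1 in R⟦y⟧. Then the norm sequence N(f)(n) = ∑_{j=0}^{2n} (−1)^j f(j) f(2n−j) satisfies (∏_{i=1}^{k} (1 − λ_i² y)) · (∑_{n≥0} N(f)_n y^n) = 1 in R⟦y⟧; that is, N(f) is the generalized Fibonacci sequence whose core polynomial has roots λ_1², …, λ_k². In particular, if all λ_i are nonzero, the norm has the same degree k as f. -/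

import Mathlib

/-!
Write `F(y) = ∑ fₙ yⁿ` and `P(y) = ∏ᵢ (1 - λᵢ y)`. The product `F(y) F(-y)` is even, and its
coefficient of `y²ⁿ` is exactly `N(f)(n)`, so `F(y) F(-y) = ∑ N(f)(n) y²ⁿ`. Likewise
`P(y) P(-y) = ∏ᵢ (1 - λᵢ² y²)`. Multiplying, `P(y)F(y) · P(-y)F(-y) = 1`, and since `y ↦ y²` is
injective on power series this is the claimed identity with `y²` in place of `y`.
-/

/-- The local Kesava Menon norm of a sequence:
`N(f)(n) = ∑_{j=0}^{2n} (−1)^j f(j) f(2n−j)`. -/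
def kmNorm {R : Type*} [CommRing R] (f : ℕ → R) : ℕ → R :=
  fun n => ∑ j ∈ Finset.range (2 * n + 1), (-1 : R) ^ j * f j * f (2 * n - j)

open Finset

namespace PowerSeries

variable {R : Type*} [CommRing R]

theorem expand_injective (p : ℕ) (hp : p ≠ 0) : Function.Injective (expand p hp (R := R)) := by
  intro φ ψ h
  ext n
  rw [← coeff_expand_mul p hp φ n, h, coeff_expand_mul]

theorem expand_two_mk_coeff_two_mul {ψ : R⟦X⟧} (hψ : ∀ n, Odd n → coeff n ψ = 0) :
    expand 2 two_ne_zero (mk fun n => coeff (2 * n) ψ) = ψ := by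
  ext n
  rw [coeff_expand]
  split_ifs with h
  · obtain ⟨m, rfl⟩ := h
    simp
  · rw [hψ n (Nat.not_even_iff_odd.mp (by rwa [even_iff_two_dvd]))]

theorem coeff_mul_rescale_neg_one_self (φ : R⟦X⟧) (n : ℕ) :
    coeff n (φ * rescale (-1) φ) =
      ∑ j ∈ range (n + 1), (-1) ^ j * coeff j φ * coeff (n - j) φ := by
  rw [coeff_mul, ← Nat.sum_antidiagonal_swap, Nat.sum_antidiagonal_eq_sum_range_succ_mk]
  refine sum_congr rfl fun j _ => ?_
  simp only [Prod.swap, coeff_rescale]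
  ring

/-- The swap `(i, j) ↦ (j, i)` pairs off the terms of an odd coefficient with opposite signs and
has no fixed point, so no division by `2` is needed. -/
theorem coeff_mul_rescale_neg_one_self_of_odd (φ : R⟦X⟧) {n : ℕ} (hn : Odd n) :
    coeff n (φ * rescale (-1) φ) = 0 := by
  rw [coeff_mul]
  refine sum_involution (fun p _ => p.swap) (fun p hp => ?_) (fun p hp _ => ?_)
    (fun p hp => ?_) (fun p _ => p.swap_swap)
  · rw [HasAntidiagonal.mem_antidiagonal] at hp
    have hsign : (-1 : R) ^ p.1 * (-1) ^ p.2 = -1 := by rw [← pow_add, hp, hn.neg_one_pow]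
    have hsq : (-1 : R) ^ p.1 * (-1) ^ p.1 = 1 := by rw [← pow_add, ← two_mul, pow_mul]; simp
    simp only [Prod.fst_swap, Prod.snd_swap, coeff_rescale]
    linear_combination coeff p.1 φ * coeff p.2 φ *
      ((-1) ^ p.1 * hsign - (-1) ^ p.2 * hsq)
  · rw [HasAntidiagonal.mem_antidiagonal] at hp
    intro hswap
    rw [Prod.swap_eq_iff_eq_swap, Prod.ext_iff] at hswap
    exact Nat.not_even_iff_odd.mpr hn ⟨p.1, by simp only [Prod.fst_swap] at hswap; omega⟩
  · rw [HasAntidiagonal.mem_antidiagonal] at hp ⊢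
    simpa [add_comm] using hp

theorem expand_two_mk_kmNorm (f : ℕ → R) :
    expand 2 two_ne_zero (mk (kmNorm f)) = mk f * rescale (-1) (mk f) := by
  have hnorm : kmNorm f = fun n => coeff (2 * n) (mk f * rescale (-1) (mk f)) := by
    ext n
    simp [kmNorm, coeff_mul_rescale_neg_one_self]
  rw [hnorm]
  exact expand_two_mk_coeff_two_mul fun n hn => coeff_mul_rescale_neg_one_self_of_odd _ hn

theorem rescale_C (a r : R) : rescale a (C r) = C r := by
  ext n
  rw [coeff_rescale, coeff_C]
  split_ifs with h
  · rw [h, pow_zero, one_mul]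
  · rw [mul_zero]

theorem expand_two_one_sub_C_sq_mul_X (a : R) :
    expand 2 two_ne_zero (1 - C (a ^ 2) * X) = (1 - C a * X) * rescale (-1) (1 - C a * X) := by
  rw [map_sub, map_sub, map_one, map_one, map_mul, map_mul, expand_C, expand_X, rescale_C,
    rescale_neg_one_X, map_pow]
  ring

end PowerSeries

open PowerSeries

theorem kmNorm_core_roots_general {R : Type*} [CommRing R] (k : ℕ)
    (lam : Fin k → R) (f : ℕ → R)
    (hf : (∏ i, (1 - PowerSeries.C (lam i) * PowerSeries.X)) *
      PowerSeries.mk f = 1) :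
    (∏ i, (1 - PowerSeries.C (lam i ^ 2) * PowerSeries.X)) *
      PowerSeries.mk (kmNorm f) = 1 := by
  set P : R⟦X⟧ := ∏ i, (1 - C (lam i) * X)
  have hP : expand 2 two_ne_zero (∏ i, (1 - C (lam i ^ 2) * X)) = P * rescale (-1) P := by
    rw [map_prod, map_prod, ← prod_mul_distrib]
    exact prod_congr rfl fun i _ => expand_two_one_sub_C_sq_mul_X (lam i)
  apply expand_injective 2 two_ne_zero
  calc expand 2 two_ne_zero ((∏ i, (1 - C (lam i ^ 2) * X)) * mk (kmNorm f))
      = (P * mk f) * rescale (-1) (P * mk f) := by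
        rw [map_mul, hP, expand_two_mk_kmNorm, map_mul (rescale (-1))]
        ring
    _ = expand 2 two_ne_zero 1 := by rw [hf, map_one, mul_one, map_one]

/-- The Kesava Menon norm preserves degree: if `f` has generating function
`∏ᵢ 1/(1 − λᵢ y)` then `N(f)` has generating function `∏ᵢ 1/(1 − λᵢ² y)`,
i.e. the core of the norm has roots `λ₁², …, λ_k²`. -/
theorem kmNorm_core_roots {R : Type*} [CommRing R] (k : ℕ) (hk : 1 ≤ k)
    (lam : Fin k → R) (f : ℕ → R)
    (hf : (∏ i, (1 - PowerSeries.C (lam i) * PowerSeries.X)) *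
      PowerSeries.mk f = 1) :
    (∏ i, (1 - PowerSeries.C (lam i ^ 2) * PowerSeries.X)) *
      PowerSeries.mk (kmNorm f) = 1 :=
  kmNorm_core_roots_general k lam f hf
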